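/- The polynomial V_m(x₁,…,x_m,y₁,…,y_m) = ∏_{1≤i<j≤m} (x_i² - x_j²)(y_i² - y_j²) · ∏_{j=1}^m x_j y_j is annihilated by the indefinite Laplacian ∑_{j=1}^m (∂²/∂x_j² - ∂²/∂y_j²). -/

import Mathlib

/-!
Write `D(x) = det (x_i ^ (2j+1))`. Pulling `x_i` out of row `i` leaves the Vandermonde matrix
in the `x_i²`, so `D(x) = ∏ x_i · ∏_{i<j} (x_j² - x_i²)`; the sign change against `V_m` occurs
once in the `x`- and once in the `y`-factor, hence `V_m = D(x) D(y)`. The indefinite Laplacian of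
`D(x) D(y)` is `ΔD(x) · D(y) - D(x) · ΔD(y)`, so it suffices that `D` is harmonic. By the Leibniz
formula, `ΔD = ∑_j (2j+1)(2j) det M_j`, where `M_j` is the matrix with column `j` replaced by
`x_i ^ (2j-1)`. For `j ≥ 1` that is column `j-1`, so `det M_j = 0`; for `j = 0` the coefficient
vanishes.
-/

open MvPolynomial

/-- The polynomial `V_m` in variables `x_1,…,x_m` (indexed by `Sum.inl`) and
`y_1,…,y_m` (indexed by `Sum.inr`):
`V_m = ∏_{i<j} (x_i²-x_j²)(y_i²-y_j²) · ∏_j x_j y_j`. -/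
noncomputable def Vm (m : ℕ) : MvPolynomial (Fin m ⊕ Fin m) ℝ :=
  (∏ i : Fin m, ∏ j ∈ Finset.univ.filter (fun j => i < j),
      ((X (Sum.inl i) ^ 2 - X (Sum.inl j) ^ 2) *
        (X (Sum.inr i) ^ 2 - X (Sum.inr j) ^ 2))) *
    ∏ j : Fin m, X (Sum.inl j) * X (Sum.inr j)

namespace MvPolynomial

section Laplacian

variable {R σ : Type*} [CommSemiring R]

noncomputable def laplacian [Fintype σ] : MvPolynomial σ R →ₗ[R] MvPolynomial σ R :=
  ∑ i, (pderiv i).toLinearMap ∘ₗ (pderiv i).toLinearMap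

theorem laplacian_apply [Fintype σ] (p : MvPolynomial σ R) :
    laplacian p = ∑ i, pderiv i (pderiv i p) := by
  simp [laplacian]

theorem pderiv_prod_X_pow_of_ne {ι : Type*} (s : Finset ι) {v : ι → σ} {i : σ}
    (hv : ∀ l ∈ s, v l ≠ i) (e : ι → ℕ) :
    pderiv i (∏ l ∈ s, (X (v l) : MvPolynomial σ R) ^ e l) = 0 :=
  Finset.prod_induction _ (fun p => pderiv i p = 0)
    (fun a b ha hb => by simp [Derivation.leibniz, ha, hb]) (by simp)
    (fun l hl => by simp [Derivation.leibniz_pow, pderiv_X_of_ne (hv l hl)])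

theorem pderiv_pderiv_X_pow_mul {i : σ} {p : MvPolynomial σ R} (hp : pderiv i p = 0) (n : ℕ) :
    pderiv i (pderiv i (X i ^ n * p)) = (n * (n - 1)) • (X i ^ (n - 2) * p) := by
  have hX : ∀ k, pderiv i (X i ^ k * p) = k • (X i ^ (k - 1) * p) := fun k => by
    simp only [Derivation.leibniz, Derivation.leibniz_pow, hp, pderiv_X_self, smul_eq_mul,
      nsmul_eq_mul, mul_zero, mul_one, zero_add]
    ring
  rw [hX, map_nsmul, hX, smul_smul, Nat.sub_sub]

theorem pderiv_pderiv_prod_X_pow {ι : Type*} [Fintype ι] [DecidableEq ι] {v : ι → σ}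
    (hv : Function.Injective v) (e : ι → ℕ) (j : ι) :
    pderiv (v j) (pderiv (v j) (∏ l, (X (v l) : MvPolynomial σ R) ^ e l)) =
      (e j * (e j - 1)) • ∏ l, X (v l) ^ Function.update e j (e j - 2) l := by
  have hrest : ∏ l ∈ Finset.univ.erase j, (X (v l) : MvPolynomial σ R) ^ e l =
      ∏ l ∈ Finset.univ.erase j, X (v l) ^ Function.update e j (e j - 2) l :=
    Finset.prod_congr rfl fun l hl => by rw [Function.update_of_ne (Finset.ne_of_mem_erase hl)]
  rw [← Finset.mul_prod_erase _ _ (Finset.mem_univ j),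
    ← Finset.mul_prod_erase _ _ (Finset.mem_univ j), Function.update_self, hrest,
    pderiv_pderiv_X_pow_mul]
  exact pderiv_prod_X_pow_of_ne _ (fun l hl => hv.ne (Finset.ne_of_mem_erase hl)) _

theorem laplacian_prod_X_pow {ι : Type*} [Fintype ι] [DecidableEq ι] [Fintype σ] (v : ι ≃ σ)
    (e : ι → ℕ) :
    laplacian (∏ l, (X (v l) : MvPolynomial σ R) ^ e l) =
      ∑ j, (e j * (e j - 1)) • ∏ l, X (v l) ^ Function.update e j (e j - 2) l := by
  rw [laplacian_apply, ← v.sum_comp]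
  exact Fintype.sum_congr _ _ fun j => pderiv_pderiv_prod_X_pow v.injective e j

end Laplacian

section Sum

variable {R σ τ : Type*} [CommSemiring R]

theorem pderiv_inl_rename_mul_rename (i : σ) (p : MvPolynomial σ R) (q : MvPolynomial τ R) :
    pderiv (Sum.inl i) (rename Sum.inl p * rename Sum.inr q) =
      rename Sum.inl (pderiv i p) * rename Sum.inr q := by
  classical
  have hq : pderiv (Sum.inl i) (rename (Sum.inr : τ → σ ⊕ τ) q) = 0 :=
    pderiv_eq_zero_of_notMem_vars fun h => by
      obtain ⟨_, -, h⟩ := mem_vars_rename _ _ h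
      exact Sum.inr_ne_inl h
  rw [Derivation.leibniz, hq, smul_zero, zero_add, pderiv_rename Sum.inl_injective, smul_eq_mul,
    mul_comm]

theorem pderiv_inr_rename_mul_rename (i : τ) (p : MvPolynomial σ R) (q : MvPolynomial τ R) :
    pderiv (Sum.inr i) (rename Sum.inl p * rename Sum.inr q) =
      rename Sum.inl p * rename Sum.inr (pderiv i q) := by
  classical
  have hp : pderiv (Sum.inr i) (rename (Sum.inl : σ → σ ⊕ τ) p) = 0 :=
    pderiv_eq_zero_of_notMem_vars fun h => by
      obtain ⟨_, -, h⟩ := mem_vars_rename _ _ h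
      exact Sum.inl_ne_inr h
  rw [Derivation.leibniz, hp, smul_zero, add_zero, pderiv_rename Sum.inr_injective, smul_eq_mul]

end Sum

section Determinant

open Matrix

variable {R n : Type*} [CommRing R] [Fintype n] [DecidableEq n]

theorem laplacian_det_X_pow (e : n → ℕ) :
    laplacian (of fun i j => (X i : MvPolynomial n R) ^ e j).det =
      ∑ j, (e j * (e j - 1)) •
        ((of fun i j => (X i : MvPolynomial n R) ^ e j).updateCol j
          fun i => X i ^ (e j - 2)).det := by
  simp only [det_apply, map_sum, map_zsmul_unit, of_apply, laplacian_prod_X_pow, Finset.smul_sum]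
  rw [Finset.sum_comm]
  refine Fintype.sum_congr _ _ fun j => Fintype.sum_congr _ _ fun τ => ?_
  rw [smul_comm]
  congr 2
  refine Fintype.prod_congr _ _ fun l => ?_
  by_cases hl : l = j
  · subst hl; simp
  · simp [hl]

theorem laplacian_det_X_pow_eq_zero {e : n → ℕ} (he : ∀ j, e j ≤ 1 ∨ ∃ k ≠ j, e k + 2 = e j) :
    laplacian (of fun i j => (X i : MvPolynomial n R) ^ e j).det = 0 := by
  rw [laplacian_det_X_pow]
  refine Finset.sum_eq_zero fun j _ => ?_
  obtain hj | ⟨k, hkj, hk⟩ := he j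
  · rw [show e j * (e j - 1) = 0 by interval_cases e j <;> rfl, zero_smul]
  · rw [det_zero_of_column_eq hkj fun i => by simp [hkj, ← hk], smul_zero]

theorem laplacian_det_X_pow_two_mul_add_one (m : ℕ) :
    laplacian (of fun i j : Fin m => (X i : MvPolynomial (Fin m) R) ^ (2 * (j : ℕ) + 1)).det
      = 0 := by
  refine laplacian_det_X_pow_eq_zero fun j => ?_
  rcases Nat.eq_zero_or_pos j with hj | hj
  · exact Or.inl (by omega)
  · exact Or.inr ⟨⟨j - 1, by omega⟩, Fin.ne_of_val_ne (by simp; omega), by simp; omega⟩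

end Determinant

end MvPolynomial

theorem Matrix.det_of_pow_two_mul_add_one {R : Type*} [CommRing R] {m : ℕ} (v : Fin m → R) :
    (Matrix.of fun i j : Fin m => v i ^ (2 * (j : ℕ) + 1)).det =
      (∏ i, v i) * ∏ i, ∏ j ∈ Finset.Ioi i, (v j ^ 2 - v i ^ 2) := by
  rw [← Matrix.det_vandermonde, ← Matrix.det_mul_column]
  congr with i j
  simp only [Matrix.vandermonde_apply]
  ring

theorem Vm_eq_rename_det_mul_rename_det (m : ℕ) :
    Vm m =
      rename Sum.inl (Matrix.of fun i j : Fin m =>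
        (X i : MvPolynomial (Fin m) ℝ) ^ (2 * (j : ℕ) + 1)).det *
      rename Sum.inr (Matrix.of fun i j : Fin m =>
        (X i : MvPolynomial (Fin m) ℝ) ^ (2 * (j : ℕ) + 1)).det := by
  have hswap : ∀ i j : Fin m, ((X (Sum.inl i) ^ 2 - X (Sum.inl j) ^ 2) *
      (X (Sum.inr i) ^ 2 - X (Sum.inr j) ^ 2) : MvPolynomial (Fin m ⊕ Fin m) ℝ) =
      (X (Sum.inl j) ^ 2 - X (Sum.inl i) ^ 2) * (X (Sum.inr j) ^ 2 - X (Sum.inr i) ^ 2) :=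
    fun _ _ => by ring
  simp only [Vm, Finset.filter_lt_eq_Ioi]
  rw [Finset.prod_congr rfl fun i _ => Finset.prod_congr rfl fun j _ => hswap i j]
  simp only [Matrix.det_of_pow_two_mul_add_one, map_mul, map_prod, map_sub, map_pow, rename_X,
    Finset.prod_mul_distrib]
  ring

/-- `V_m` is annihilated by the indefinite Laplacian `∑_j (∂²/∂x_j² - ∂²/∂y_j²)`. -/
theorem indefinite_laplacian_Vm (m : ℕ) :
    ∑ j : Fin m,
      (pderiv (Sum.inl j) (pderiv (Sum.inl j) (Vm m)) -
        pderiv (Sum.inr j) (pderiv (Sum.inr j) (Vm m))) = 0 := by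
  simp only [Vm_eq_rename_det_mul_rename_det, pderiv_inl_rename_mul_rename, pderiv_inr_rename_mul_rename,
    Finset.sum_sub_distrib, ← Finset.sum_mul, ← Finset.mul_sum, ← map_sum, ← laplacian_apply,
    laplacian_det_X_pow_two_mul_add_one, map_zero, zero_mul, mul_zero, sub_zero]
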